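/- arXiv:2008.07238 — 4 statements merged into one kernel-verified Lean document; each statement's English description precedes it below -/
import Mathlib

section
/- For f ∈ L²(ℝ) and any x ∈ ℝ, the Fourier transform of ω ↦ |Gf(x,ω)|² satisfies F₂(|Gf|²)(x,ω) = ⟨f_ω, T_x φ_ω⟩, where f_ω = (T_ω f)·conj(f), φ_ω = (T_ω φ)·conj(φ), T_x denotes translation by x, and φ(t) = e^{-πt²}. -/
/-!
Put `g = f · T_x φ`. Then `Gf(x, ·) = ĝ`, and `|ĝ|²` is the Fourier transform of the
autocorrelation `g ⋆ g*`, where `g*(t) = conj (g (-t))`; the claim is Fourier inversion for this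
autocorrelation, which is continuous because translation is continuous on `L²`. The one
analytic point is that `|ĝ|²` is integrable: an integrable function, continuous at `0`, whose
Fourier transform is nonnegative has an integrable Fourier transform, since pairing the
transform with ever wider Gaussians converges to the value at `0`, and Fatou's lemma applies.
-/

open MeasureTheory Complex

/-- The Gabor transform with Gaussian window `φ(t) = exp(-π t²)`. -/
noncomputable def gaborTransform (f : ℝ → ℂ) (x ω : ℝ) : ℂ :=
  ∫ t : ℝ, f t * (Real.exp (-Real.pi * (t - x)^2) : ℂ) *
    Complex.exp (-2 * Real.pi * Complex.I * t * ω)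

open Filter Topology FourierTransform ComplexConjugate ComplexOrder
open scoped Convolution ENNReal InnerProductSpace

section

variable {V : Type*} [NormedAddCommGroup V] [InnerProductSpace ℝ V] [FiniteDimensional ℝ V]
  [MeasurableSpace V] [BorelSpace V]

theorem tendsto_integral_exp_sq_smul_fourier {E : Type*} [NormedAddCommGroup E]
    [NormedSpace ℂ E] [CompleteSpace E] {A : V → E} (hA : Integrable A) (hA0 : ContinuousAt A 0) :
    Tendsto (fun c : ℝ ↦ ∫ ξ, Real.exp (-c⁻¹ * ‖ξ‖ ^ 2) • 𝓕 A ξ) atTop (𝓝 (A 0)) := by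
  refine (Real.tendsto_integral_gaussian_smul' hA hA0).congr' ?_
  filter_upwards [Ioi_mem_atTop 0] with c (hc : 0 < c)
  have hb : 0 < ((c : ℂ)⁻¹).re := by simpa using hc
  set γ : V → ℂ := fun ξ ↦ cexp (-(c : ℂ)⁻¹ * ‖ξ‖ ^ 2)
  have hγ : Integrable γ := by
    simpa [γ, neg_mul] using GaussianFourier.integrable_cexp_neg_mul_sq_norm_add hb 0 (0 : V)
  have hself : ∫ w, 𝓕 γ w • A w = ∫ ξ, γ ξ • 𝓕 A ξ := by
    have := VectorFourier.integral_fourierIntegral_smul_eq_flip (L := innerₗ V)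
      Real.continuous_fourierChar continuous_inner hγ hA
    rwa [flip_innerₗ] at this
  -- `𝓕 γ` is the Gaussian approximate identity of `Real.tendsto_integral_gaussian_smul'`
  calc _ = ∫ w, 𝓕 γ w • A w := by
        congr 1 with w
        rw [fourier_gaussian_innerProductSpace hb]
        simp only [div_eq_mul_inv, neg_mul, zero_sub, norm_neg, inv_inv]
        ring_nf
    _ = ∫ ξ, γ ξ • 𝓕 A ξ := hself
    _ = _ := by
        congr 1 with ξ
        rw [← Complex.coe_smul]
        simp [γ]

theorem integrable_exp_neg_mul_sq_norm {b : ℝ} (hb : 0 < b) :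
    Integrable fun ξ : V ↦ Real.exp (-b * ‖ξ‖ ^ 2) := by
  have := (GaussianFourier.integrable_cexp_neg_mul_sq_norm_add (b := b) (by simpa) 0 (0 : V)).norm
  refine this.congr (ae_of_all _ fun ξ ↦ ?_)
  simp only [zero_mul, add_zero, ← ofReal_pow, ← ofReal_neg, ← ofReal_mul, norm_exp_ofReal]

theorem integrable_fourier_of_nonneg {A : V → ℂ} (hA : Integrable A) (hA0 : ContinuousAt A 0)
    (hpos : ∀ ξ, 0 ≤ 𝓕 A ξ) : Integrable (𝓕 A) := by
  set F : ℝ → V → ℂ := fun c ξ ↦ Real.exp (-c⁻¹ * ‖ξ‖ ^ 2) • 𝓕 A ξ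
  have hcont : Continuous (𝓕 A) :=
    VectorFourier.fourierIntegral_continuous Real.continuous_fourierChar continuous_inner hA
  have hF_cont (c : ℝ) : Continuous (F c) :=
    (show Continuous fun ξ : V ↦ Real.exp (-c⁻¹ * ‖ξ‖ ^ 2) by fun_prop).smul hcont
  have hF_int : ∀ᶠ c in atTop, Integrable (F c) := by
    filter_upwards [Ioi_mem_atTop 0] with c (hc : 0 < c)
    exact (integrable_exp_neg_mul_sq_norm (inv_pos.2 hc)).smul_bdd _ hcont.aestronglyMeasurable
      (ae_of_all _ fun ξ ↦ VectorFourier.norm_fourierIntegral_le_integral_norm _ _ _ _ ξ)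
  have hF_tendsto (ξ : V) : Tendsto (F · ξ) atTop (𝓝 (𝓕 A ξ)) := by
    have : Tendsto (fun c : ℝ ↦ Real.exp (-c⁻¹ * ‖ξ‖ ^ 2)) atTop (𝓝 1) := by
      simpa using (tendsto_inv_atTop_zero.neg.mul_const (‖ξ‖ ^ 2)).rexp
    simpa only [one_smul] using this.smul_const (𝓕 A ξ)
  -- positivity of `𝓕 A` turns the Gaussian-regularised integrals into `L¹` norms
  have hF_norm : ∀ c, ∫ ξ, F c ξ = ((∫ ξ, ‖F c ξ‖ : ℝ) : ℂ) := fun c ↦ by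
    rw [← integral_complex_ofReal]
    congr 1 with ξ
    exact (Complex.norm_of_nonneg' (smul_nonneg (Real.exp_nonneg _) (hpos ξ))).symm
  have hlim : Tendsto (fun c ↦ ∫ ξ, ‖F c ξ‖) atTop (𝓝 ‖A 0‖) := by
    refine (tendsto_integral_exp_sq_smul_fourier hA hA0).norm.congr fun c ↦ ?_
    rw [hF_norm, Complex.norm_real, Real.norm_of_nonneg (integral_nonneg fun _ ↦ norm_nonneg _)]
  refine ⟨hcont.aestronglyMeasurable, ?_⟩
  calc ∫⁻ ξ, ‖𝓕 A ξ‖ₑ = ∫⁻ ξ, liminf (fun c ↦ ‖F c ξ‖ₑ) atTop :=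
        lintegral_congr fun ξ ↦ ((hF_tendsto ξ).enorm.liminf_eq).symm
    _ ≤ liminf (fun c ↦ ∫⁻ ξ, ‖F c ξ‖ₑ) atTop :=
        lintegral_liminf_le' fun c ↦ (hF_cont c).aemeasurable.enorm
    _ = ENNReal.ofReal ‖A 0‖ := by
        refine (Tendsto.liminf_eq ?_)
        refine (ENNReal.tendsto_ofReal hlim).congr' ?_
        filter_upwards [hF_int] with c hc
        exact ofReal_integral_norm_eq_lintegral_enorm hc
    _ < ⊤ := ENNReal.ofReal_lt_top

def conjNeg (g : V → ℂ) (v : V) : ℂ := conj (g (-v))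

theorem integrable_conjNeg {g : V → ℂ} (hg : Integrable g) : Integrable (conjNeg g) :=
  memLp_one_iff_integrable.1 (memLp_one_iff_integrable.2 hg.comp_neg).star

theorem fourier_conjNeg (g : V → ℂ) (ξ : V) : 𝓕 (conjNeg g) ξ = conj (𝓕 g ξ) := by
  simp only [Real.fourier_eq, conjNeg, ← integral_conj]
  rw [← integral_neg_eq_self]
  congr 1 with v
  simp [Circle.smul_def, inner_neg_left]

noncomputable def autocorr (g : V → ℂ) (τ : V) : ℂ := ∫ t, g t * conj (g (t - τ))

theorem autocorr_eq_convolution (g : V → ℂ) :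
    autocorr g = g ⋆[ContinuousLinearMap.mul ℂ ℂ] conjNeg g := by
  ext τ
  simp [autocorr, convolution, conjNeg]

theorem integrable_autocorr {g : V → ℂ} (hg : Integrable g) : Integrable (autocorr g) :=
  autocorr_eq_convolution g ▸ hg.integrable_convolution _ (integrable_conjNeg hg)

theorem fourier_autocorr {g : V → ℂ} (hg : Integrable g) (ξ : V) :
    𝓕 (autocorr g) ξ = ((‖𝓕 g ξ‖ ^ 2 : ℝ) : ℂ) := by
  rw [autocorr_eq_convolution, Real.fourier_mul_convolution_eq hg (integrable_conjNeg hg),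
    fourier_conjNeg, mul_conj', ofReal_pow]

theorem continuous_autocorr {g : V → ℂ} (hg : MemLp g 2) : Continuous (autocorr g) := by
  set G : Lp ℂ 2 (volume : Measure V) := hg.toLp g
  have hT (τ : V) : MeasurePreserving (· - τ) (volume : Measure V) volume :=
    measurePreserving_sub_right volume τ
  have hshift : Continuous fun τ : V ↦ Lp.compMeasurePreserving (· - τ) (hT τ) G :=
    continuous_const.compMeasurePreservingLp (g := fun τ : V ↦ ⟨(· - τ), by fun_prop⟩)
      (ContinuousMap.continuous_of_continuous_uncurry _ (continuous_snd.sub continuous_fst)) hT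
      (by norm_num)
  suffices autocorr g = fun τ ↦ ⟪Lp.compMeasurePreserving (· - τ) (hT τ) G, G⟫_ℂ from
    this ▸ hshift.inner continuous_const
  ext τ
  refine integral_congr_ae ?_
  filter_upwards [(Lp.coeFn_compMeasurePreserving G (hT τ)).trans
    ((hT τ).quasiMeasurePreserving.ae_eq_comp hg.coeFn_toLp), hg.coeFn_toLp] with t h₁ h₂
  rw [RCLike.inner_apply, h₁, h₂, Function.comp_apply, mul_comm]

theorem fourier_sq_norm_fourier {g : V → ℂ} (hg₁ : Integrable g) (hg₂ : MemLp g 2) (w : V) :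
    𝓕 (fun ξ ↦ ((‖𝓕 g ξ‖ ^ 2 : ℝ) : ℂ)) w = ∫ t, g (t - w) * conj (g t) := by
  have hA := integrable_autocorr hg₁
  have hA_cont := continuous_autocorr hg₂
  have hA_pos (ξ : V) : 0 ≤ 𝓕 (autocorr g) ξ := by
    rw [fourier_autocorr hg₁]
    exact zero_le_real.2 (sq_nonneg _)
  calc _ = 𝓕⁻ (𝓕 (autocorr g)) (-w) := by
        rw [Real.fourierInv_eq_fourier_neg, neg_neg, funext (fourier_autocorr hg₁)]
    _ = autocorr g (-w) :=
        hA.fourierInv_fourier_eq (integrable_fourier_of_nonneg hA hA_cont.continuousAt hA_pos)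
          hA_cont.continuousAt
    _ = ∫ t, g (t - w) * conj (g t) := by
        rw [autocorr, ← integral_sub_right_eq_self _ w]
        simp_rw [sub_neg_eq_add, sub_add_cancel]

end

theorem fourier_real_eq_integral_mul_cexp (h : ℝ → ℂ) (ω : ℝ) :
    𝓕 h ω = ∫ t, h t * cexp (-2 * Real.pi * I * t * ω) := by
  rw [Real.fourier_real_eq_integral_exp_smul]
  congr 1 with t
  rw [smul_eq_mul, mul_comm]
  push_cast
  ring_nf

theorem memLp_mul_gaussian {f : ℝ → ℂ} {p : ℝ≥0∞} (hf : MemLp f p) (x : ℝ) :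
    MemLp (fun t ↦ f t * (Real.exp (-Real.pi * (t - x) ^ 2) : ℂ)) p := by
  refine hf.of_le (hf.aestronglyMeasurable.mul (by fun_prop)) (ae_of_all _ fun t ↦ ?_)
  rw [norm_mul, norm_real, Real.norm_of_nonneg (Real.exp_nonneg _)]
  refine mul_le_of_le_one_right (norm_nonneg _) (Real.exp_le_one_iff.2 ?_)
  nlinarith [Real.pi_pos, sq_nonneg (t - x)]

/-- `F₂(|Gf|²)(x,ω) = ⟨f_ω, T_x φ_ω⟩` where `h_τ = (T_τ h)·conj(h)` and
`φ(t) = exp(-π t²)` (so `φ_ω` is real-valued and equals its own conjugate). -/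
theorem fourier_of_spectrogram (f : ℝ → ℂ) (hf : MemLp f 4 volume)
    (hsupp : HasCompactSupport f) (x ω : ℝ) :
    (∫ ν : ℝ, ((‖gaborTransform f x ν‖^2 : ℝ) : ℂ) *
        Complex.exp (-2 * Real.pi * Complex.I * ν * ω)) =
      ∫ t : ℝ, (f (t - ω) * starRingEnd ℂ (f t)) *
        starRingEnd ℂ ((Real.exp (-Real.pi * ((t - x) - ω)^2) : ℂ) *
          starRingEnd ℂ (Real.exp (-Real.pi * (t - x)^2) : ℂ)) := by
  set g : ℝ → ℂ := fun t ↦ f t * (Real.exp (-Real.pi * (t - x) ^ 2) : ℂ)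
  have hf_le {p : ℝ≥0∞} (hp : p ≤ 4) : MemLp f p :=
    hf.mono_exponent_of_measure_support_ne_top (fun _ ↦ image_eq_zero_of_notMem_tsupport)
      hsupp.measure_lt_top.ne hp
  have hg₁ : Integrable g :=
    memLp_one_iff_integrable.1 (memLp_mul_gaussian (hf_le (by norm_num)) x)
  have hg₂ : MemLp g 2 := memLp_mul_gaussian (hf_le (by norm_num)) x
  have hgabor (ν : ℝ) : gaborTransform f x ν = 𝓕 g ν :=
    (fourier_real_eq_integral_mul_cexp g ν).symm
  simp_rw [hgabor, ← fourier_real_eq_integral_mul_cexp, fourier_sq_norm_fourier hg₁ hg₂]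
  congr 1 with t
  simp only [g, map_mul, conj_ofReal, sub_right_comm t ω x]
  ring
end

section
/- If f ∈ L²(ℝ) is supported in [−c/2, c/2] for some c > 0, then for every fixed x ∈ ℝ, the function ω ↦ |Gf(x,ω)|² belongs to the Paley–Wiener space PW²_{2c}(ℝ), i.e. it is in L²(ℝ) and its Fourier transform is supported in [−c, c]. -/
open MeasureTheory Complex

/-!
Put `g t = f t · φ(t - x)`, so that `Gf(x, ·) = 𝓕 g` and `g ∈ L¹ ∩ L²` is supported in
`K = [-c/2, c/2]`. With `g̃ t = conj (g (-t))` the spectrogram is `|𝓕 g|² = 𝓕 (g ⋆ g̃)`, and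
`g ⋆ g̃` is supported in `K - K = [-c, c]`, so Fourier inversion gives
`𝓕 |𝓕 g|² ξ = (g ⋆ g̃) (-ξ) = 0` for `ξ ∉ [-c, c]`. Square integrability: `𝓕 g` is bounded by
`‖g‖₁` and lies in `L²` by Plancherel, so `|𝓕 g|² ∈ L²`.
-/

open FourierTransform SchwartzMap Set Function ComplexConjugate Convolution Pointwise

section Fourier

variable {V : Type*} [NormedAddCommGroup V] [InnerProductSpace ℝ V] [FiniteDimensional ℝ V]
  [MeasurableSpace V] [BorelSpace V]

theorem MeasureTheory.Integrable.fourier_ae_eq_fourier_toLp {g : V → ℂ} (hg₁ : Integrable g)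
    (hg₂ : MemLp g 2) : 𝓕 g =ᵐ[volume] (𝓕 (hg₂.toLp g) : Lp ℂ 2 (volume : Measure V)) := by
  -- Both sides define the same tempered distribution, by self-adjointness of `𝓕` on `L¹`.
  refine ae_eq_of_integral_contDiff_smul_eq ?_ ((Lp.memLp _).locallyIntegrable (by norm_num)) ?_
  · exact (VectorFourier.fourierIntegral_continuous Real.continuous_fourierChar
      continuous_inner hg₁).locallyIntegrable
  intro ψ hψ hψc
  let φ : 𝓢(V, ℂ) := HasCompactSupport.toSchwartzMap (f := fun v => (ψ v : ℂ))
    (hψc.comp_left Complex.ofReal_zero) (ofRealCLM.contDiff.comp hψ)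
  have hφ : ∀ v, φ v = ψ v := fun v => rfl
  have hself : ∫ v, 𝓕 (φ : V → ℂ) v * g v = ∫ v, φ v * 𝓕 g v := by
    have := VectorFourier.integral_fourierIntegral_smul_eq_flip (μ := volume) (ν := volume)
      (L := innerₗ V) (e := Real.fourierChar) Real.continuous_fourierChar continuous_inner
      φ.integrable hg₁
    simp only [smul_eq_mul, flip_innerₗ] at this
    exact this
  have key := congrArg (fun T => T φ) (Lp.fourier_toTemperedDistribution_eq (hg₂.toLp g))
  simp only [TemperedDistribution.fourier_apply, Lp.toTemperedDistribution_apply, smul_eq_mul,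
    SchwartzMap.fourier_coe] at key
  calc ∫ v, ψ v • 𝓕 g v = ∫ v, 𝓕 (φ : V → ℂ) v * g v := by
        rw [hself]; simp [hφ, Complex.real_smul]
    _ = ∫ v, 𝓕 (φ : V → ℂ) v * hg₂.toLp g v := integral_congr_ae <| by
        filter_upwards [hg₂.coeFn_toLp] with v hv; rw [hv]
    _ = _ := by rw [key]; simp [hφ, Complex.real_smul]

theorem MeasureTheory.Integrable.memLp_two_fourier {g : V → ℂ} (hg₁ : Integrable g)
    (hg₂ : MemLp g 2) : MemLp (𝓕 g) 2 :=
  (Lp.memLp _).ae_eq (hg₁.fourier_ae_eq_fourier_toLp hg₂).symm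

theorem MeasureTheory.Integrable.memLp_two_sq_norm_fourier {g : V → ℂ} (hg₁ : Integrable g)
    (hg₂ : MemLp g 2) : MemLp (fun w => ((‖𝓕 g w‖ ^ 2 : ℝ) : ℂ)) 2 := by
  have hcont : Continuous (𝓕 g) :=
    VectorFourier.fourierIntegral_continuous Real.continuous_fourierChar continuous_inner hg₁
  refine (hg₁.memLp_two_fourier hg₂).of_le_mul (c := ∫ v, ‖g v‖)
    (by fun_prop : Continuous fun w => ((‖𝓕 g w‖ ^ 2 : ℝ) : ℂ)).aestronglyMeasurable ?_
  refine Filter.Eventually.of_forall fun w => ?_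
  rw [Complex.norm_real, Real.norm_of_nonneg (by positivity), sq]
  exact mul_le_mul_of_nonneg_right (VectorFourier.norm_fourierIntegral_le_integral_norm ..)
    (norm_nonneg _)

theorem fourier_conj_comp_neg (g : V → ℂ) (w : V) :
    𝓕 (fun v => conj (g (-v))) w = conj (𝓕 g w) := by
  rw [← Real.fourierInv_eq_fourier_comp_neg (fun v => conj (g v)), Real.fourierInv_eq,
    Real.fourier_eq, ← integral_conj]
  congr 1 with v
  simp [Circle.smul_def, ← Circle.coe_inv_eq_conj, AddChar.map_neg_eq_inv]

theorem MeasureTheory.Integrable.conj_comp_neg {g : V → ℂ} (hg : Integrable g) :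
    Integrable (fun v => conj (g (-v))) :=
  conjCLE.toContinuousLinearMap.integrable_comp hg.comp_neg

theorem fourier_convolution_conj_comp_neg {g : V → ℂ} (hg : Integrable g) (w : V) :
    𝓕 (g ⋆[ContinuousLinearMap.mul ℂ ℂ] fun v => conj (g (-v))) w = ((‖𝓕 g w‖ ^ 2 : ℝ) : ℂ) := by
  rw [Real.fourier_mul_convolution_eq hg hg.conj_comp_neg, fourier_conj_comp_neg, mul_conj,
    normSq_eq_norm_sq]

theorem MeasureTheory.Integrable.fourier_fourier_eq_zero_of_neg_notMem_tsupport {h : V → ℂ}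
    (hh : Integrable h) (hFh : Integrable (𝓕 h)) {ξ : V} (hξ : -ξ ∉ tsupport h) :
    𝓕 (𝓕 h) ξ = 0 := by
  have hcont : ContinuousAt h (-ξ) :=
    continuousAt_const.congr (notMem_tsupport_iff_eventuallyEq.mp hξ).symm
  rw [← neg_neg ξ, ← Real.fourierInv_eq_fourier_neg, hh.fourierInv_fourier_eq hFh hcont]
  exact image_eq_zero_of_notMem_tsupport hξ

theorem fourier_sq_norm_fourier_eq_zero_of_notMem_sub {g : V → ℂ} {K : Set V} (hK : IsCompact K)
    (hgK : support g ⊆ K) (hg₁ : Integrable g) (hg₂ : MemLp g 2) {ξ : V} (hξ : ξ ∉ K - K) :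
    𝓕 (fun w => ((‖𝓕 g w‖ ^ 2 : ℝ) : ℂ)) ξ = 0 := by
  set g' : V → ℂ := fun v => conj (g (-v))
  have hg'K : support g' ⊆ -K := fun v hv => hgK (by simpa [g'] using hv)
  have hh := hg₁.integrable_convolution (ContinuousLinearMap.mul ℂ ℂ) hg₁.conj_comp_neg
  have hFh : 𝓕 (g ⋆[ContinuousLinearMap.mul ℂ ℂ] g') = fun w => ((‖𝓕 g w‖ ^ 2 : ℝ) : ℂ) :=
    funext (fourier_convolution_conj_comp_neg hg₁)
  have hsupp : tsupport (g ⋆[ContinuousLinearMap.mul ℂ ℂ] g') ⊆ K - K := by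
    rw [sub_eq_add_neg]
    exact closure_minimal ((support_convolution_subset _).trans (add_subset_add hgK hg'K))
      (hK.add hK.neg).isClosed
  rw [← hFh]
  refine hh.fourier_fourier_eq_zero_of_neg_notMem_tsupport ?_ fun hmem => hξ ?_
  · have hF := hg₁.memLp_two_fourier hg₂
    rw [hFh]
    exact ((memLp_two_iff_integrable_sq_norm hF.1).1 hF).ofReal
  · rw [← neg_sub K K, mem_neg]
    exact hsupp hmem

end Fourier

theorem gaborTransform_eq_fourier (f : ℝ → ℂ) (x : ℝ) :
    gaborTransform f x = 𝓕 (fun t => f t * (Real.exp (-Real.pi * (t - x) ^ 2) : ℂ)) := by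
  ext ω
  rw [gaborTransform, Real.fourier_real_eq_integral_exp_smul]
  congr 1 with t
  rw [smul_eq_mul, mul_comm]
  congr 2
  push_cast
  ring

theorem memLp_top_gaussian_window (x : ℝ) :
    MemLp (fun t : ℝ => (Real.exp (-Real.pi * (t - x) ^ 2) : ℂ)) ⊤ := by
  refine memLp_top_of_bound (by fun_prop) 1 (Filter.Eventually.of_forall fun t => ?_)
  rw [Complex.norm_real, Real.norm_of_nonneg (Real.exp_nonneg _), Real.exp_le_one_iff]
  nlinarith [sq_nonneg (t - x), Real.pi_pos]

theorem spectrogram_mem_paleyWiener_general (c : ℝ) (f : ℝ → ℂ)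
    (hf : MemLp f 2 volume)
    (hsupp : ∀ t : ℝ, t ∉ Set.Icc (-(c/2)) (c/2) → f t = 0) (x : ℝ) :
    MemLp (fun ω : ℝ => ((‖gaborTransform f x ω‖^2 : ℝ) : ℂ)) 2 volume ∧
      ∀ ξ : ℝ, ξ ∉ Set.Icc (-c) c →
        FourierTransform.fourier (fun ω : ℝ => ((‖gaborTransform f x ω‖^2 : ℝ) : ℂ)) ξ = 0 := by
  set g : ℝ → ℂ := fun t => f t * (Real.exp (-Real.pi * (t - x) ^ 2) : ℂ)
  have hg_supp : ∀ t ∉ Icc (-(c/2)) (c/2), g t = 0 := fun t ht => by simp [g, hsupp t ht]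
  have hg₂ : MemLp g 2 := (memLp_top_gaussian_window x).mul' hf
  have hg₁ : Integrable g := memLp_one_iff_integrable.1 <|
    hg₂.mono_exponent_of_measure_support_ne_top hg_supp measure_Icc_lt_top.ne one_le_two
  rw [gaborTransform_eq_fourier]
  refine ⟨hg₁.memLp_two_sq_norm_fourier hg₂, fun ξ hξ => ?_⟩
  refine fourier_sq_norm_fourier_eq_zero_of_notMem_sub isCompact_Icc
    (fun t ht => by_contra fun h => ht (hg_supp t h)) hg₁ hg₂ fun hmem => hξ ?_
  obtain ⟨a, ⟨ha₁, ha₂⟩, b, ⟨hb₁, hb₂⟩, rfl⟩ := hmem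
  constructor <;> linarith

/-- If `f ∈ L²` is supported in `[-c/2, c/2]`, then for every `x` the function
`ω ↦ |Gf(x,ω)|²` lies in the Paley–Wiener space `PW²_{2c}`: it is in `L²` and its
Fourier transform vanishes outside `[-c, c]`. -/
theorem spectrogram_mem_paleyWiener (c : ℝ) (hc : 0 < c) (f : ℝ → ℂ)
    (hf : MemLp f 2 volume)
    (hsupp : ∀ t : ℝ, t ∉ Set.Icc (-(c/2)) (c/2) → f t = 0) (x : ℝ) :
    MemLp (fun ω : ℝ => ((‖gaborTransform f x ω‖^2 : ℝ) : ℂ)) 2 volume ∧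
      ∀ ξ : ℝ, ξ ∉ Set.Icc (-c) c →
        FourierTransform.fourier (fun ω : ℝ => ((‖gaborTransform f x ω‖^2 : ℝ) : ℂ)) ξ = 0 :=
  spectrogram_mem_paleyWiener_general c f hf hsupp x
end

section
/- Let f, h : ℝ → ℂ be measurable functions such that (T_ω f)·conj(f) = (T_ω h)·conj(h) almost everywhere for every ω ∈ ℝ. Then there exists τ ∈ ℂ with |τ| = 1 such that f = τ·h almost everywhere, or both f and h vanish almost everywhere. -/
open MeasureTheory Complex

/-!
Taking `ω = 0` gives `‖f‖ = ‖h‖` a.e. By Fubini and the change of variables `s = t - ω`, the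
hypothesis says `f s * conj (f t) = h s * conj (h t)` for almost every pair `(s, t)`. Fixing one
good `t₀` with `f t₀ ≠ 0` gives `f = (f t₀ / h t₀) * h` a.e., and the factor is unimodular
because `‖f t₀‖ = ‖h t₀‖`.
-/

theorem ae_ae_of_forall_ae_sub {G : Type*} [AddCommGroup G] [MeasurableSpace G]
    [MeasurableAdd G] [MeasurableSub₂ G] [MeasurableNeg G] {μ : Measure G} [SFinite μ]
    [μ.IsAddLeftInvariant] [μ.IsNegInvariant] {p : G → G → Prop}
    (hp : MeasurableSet {x : G × G | p x.1 x.2}) (H : ∀ ω, ∀ᵐ t ∂μ, p (t - ω) t) :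
    ∀ᵐ t ∂μ, ∀ᵐ s ∂μ, p s t := by
  have hshear : MeasurableSet {x : G × G | p (x.2 - x.1) x.2} :=
    (measurable_snd.sub measurable_fst).prodMk measurable_snd hp
  filter_upwards [(Measure.ae_ae_comm (μ := μ) (ν := μ) hshear).mp (.of_forall H)] with t ht
  simpa using (Measure.measurePreserving_sub_left μ t).quasiMeasurePreserving.ae
    (p := fun ω => p (t - ω) t) ht

theorem eq_div_mul_of_mul_conj_eq {a b c d : ℂ} (hc : c ≠ 0) (hcd : ‖c‖ = ‖d‖)
    (H : a * starRingEnd ℂ c = b * starRingEnd ℂ d) : a = c / d * b := by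
  have hd : d ≠ 0 := norm_ne_zero_iff.mp (hcd ▸ norm_ne_zero_iff.mpr hc)
  have hsq : c * starRingEnd ℂ c = d * starRingEnd ℂ d := by
    rw [mul_conj', mul_conj', hcd]
  rw [div_mul_eq_mul_div, eq_div_iff hd]
  refine mul_left_cancel₀ (mul_ne_zero hc ((map_ne_zero (starRingEnd ℂ)).mpr hc)) ?_
  linear_combination (c * d) * H - (c * b) * hsq

theorem norm_eq_of_mul_conj_eq {a b : ℂ} (H : a * starRingEnd ℂ a = b * starRingEnd ℂ b) :
    ‖a‖ = ‖b‖ := by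
  rw [mul_conj', mul_conj'] at H
  exact (pow_left_inj₀ (norm_nonneg a) (norm_nonneg b) two_ne_zero).mp (by exact_mod_cast H)

/-- If `(T_ω f)·conj(f) = (T_ω h)·conj(h)` a.e. for every `ω ∈ ℝ`, then `f = τ·h`
a.e. for some unimodular `τ`, or both `f` and `h` vanish a.e. -/
theorem phase_from_correlations (f h : ℝ → ℂ) (hf : Measurable f) (hh : Measurable h)
    (H : ∀ ω : ℝ, ∀ᵐ t : ℝ, f (t - ω) * starRingEnd ℂ (f t) =
      h (t - ω) * starRingEnd ℂ (h t)) :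
    (∃ τ : ℂ, ‖τ‖ = 1 ∧ ∀ᵐ t : ℝ, f t = τ * h t) ∨
      ((∀ᵐ t : ℝ, f t = 0) ∧ (∀ᵐ t : ℝ, h t = 0)) := by
  have hnorm : ∀ᵐ t : ℝ, ‖f t‖ = ‖h t‖ := by
    filter_upwards [H 0] with t ht
    exact norm_eq_of_mul_conj_eq (by simpa using ht)
  by_cases hf0 : ∀ᵐ t : ℝ, f t = 0
  · refine .inr ⟨hf0, ?_⟩
    filter_upwards [hf0, hnorm] with t hft ht
    simpa [hft] using ht.symm
  have hslices : ∀ᵐ t : ℝ, ∀ᵐ s : ℝ, f s * starRingEnd ℂ (f t) = h s * starRingEnd ℂ (h t) :=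
    ae_ae_of_forall_ae_sub (measurableSet_eq_fun (by fun_prop) (by fun_prop)) H
  obtain ⟨t₀, hft₀, hslice, hnorm₀⟩ :=
    ((Filter.not_eventually.mp hf0).and_eventually (hslices.and hnorm)).exists
  refine .inl ⟨f t₀ / h t₀, ?_, ?_⟩
  · rw [norm_div, hnorm₀, div_self (hnorm₀ ▸ norm_ne_zero_iff.mpr hft₀)]
  · filter_upwards [hslice] with s hs
    exact eq_div_mul_of_mul_conj_eq hft₀ hnorm₀ hs
end

section
/- For β > 0 and f = Σ_{k∈ℤ} c_k φ(·−βk) ∈ V¹_β(φ) with c ∈ ℓ¹(ℤ), the squared spectrogram admits the expansion |Gf(x,ω)|² = Σ_k Σ_j c_k conj(c_j) · (1/2)e^{-(πβ²/4)(k−j)²} · e^{πiβ(j−k)ω} φ(ω) · φ(x − (β/2)(j+k)) for all (x,ω) ∈ ℝ². -/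
/-!
A translated Gaussian has an explicit Gaussian Gabor transform: completing the square gives
`G(φ(· - a))(x, ω) = 2^{-1/2} e^{-π((x - a)² + ω²)/2} e^{-πi(x + a)ω}`.
Since `c ∈ ℓ¹` and the translates are bounded by `1`, `G` commutes with the series defining
`f`, so `|Gf|² = Gf · conj (Gf)` is the double series of the terms
`c_k conj(c_j) G(φ_{βk}) conj(G(φ_{βj}))`, each of which is explicit by
`(x - a)² + (x - b)² = 2 (x - (a + b)/2)² + (a - b)²/2`.
-/

open MeasureTheory Complex

section

open Real

theorem ofReal_norm_sq_tsum {ι : Type*} (z : ι → ℂ) :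
    ((‖∑' k, z k‖ ^ 2 : ℝ) : ℂ) = ∑' k, ∑' j, z k * starRingEnd ℂ (z j) := by
  rw [ofReal_pow, ← mul_conj', ← tsum_mul_right]
  refine tsum_congr fun k => ?_
  rw [tsum_mul_left]
  exact congrArg _ (tsum_star (f := z))

theorem norm_modulated_gaussian_shift (x ω t : ℝ) :
    ‖(Real.exp (-π * (t - x) ^ 2) : ℂ) * cexp (-2 * π * I * t * ω)‖ =
      Real.exp (-π * (t - x) ^ 2) := by
  rw [norm_mul, Complex.norm_exp, norm_real, Real.norm_of_nonneg (Real.exp_nonneg _)]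
  simp

theorem integrable_gaussian_shift (x : ℝ) :
    Integrable (fun t : ℝ => Real.exp (-π * (t - x) ^ 2)) := by
  simpa using (integrable_exp_neg_mul_sq pi_pos).comp_sub_right x

theorem norm_gaussian_shift_le_one (a t : ℝ) : ‖(Real.exp (-π * (t - a) ^ 2) : ℂ)‖ ≤ 1 := by
  rw [norm_real, Real.norm_of_nonneg (exp_nonneg _), exp_le_one_iff, neg_mul]
  exact neg_nonpos.mpr (by positivity)

theorem integrable_modulated_gaussian_shift (x ω : ℝ) :
    Integrable (fun t : ℝ => (Real.exp (-π * (t - x) ^ 2) : ℂ) * cexp (-2 * π * I * t * ω)) := by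
  refine (integrable_norm_iff ?_).mp ?_
  · fun_prop
  · simpa only [norm_modulated_gaussian_shift] using integrable_gaussian_shift x

theorem gaborTransform_tsum {ι : Type*} [Countable ι] (c : ι → ℂ) (hc : Summable fun k => ‖c k‖)
    (g : ι → ℝ → ℂ) (C : ℝ) (hg_meas : ∀ k, AEStronglyMeasurable (g k))
    (hg_bdd : ∀ k t, ‖g k t‖ ≤ C) (x ω : ℝ) :
    gaborTransform (fun t => ∑' k, c k * g k t) x ω = ∑' k, c k * gaborTransform (g k) x ω := by
  set w : ℝ → ℂ := fun t => (Real.exp (-π * (t - x) ^ 2) : ℂ) * cexp (-2 * π * I * t * ω)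
  have hgw : ∀ k, Integrable (fun t => g k t * w t) :=
    fun k => (integrable_modulated_gaussian_shift x ω).bdd_mul (hg_meas k) (.of_forall (hg_bdd k))
  have hnorm_le : ∀ k,
      ∫ t, ‖c k * (g k t * w t)‖ ≤ ‖c k‖ * C * ∫ t, Real.exp (-π * (t - x) ^ 2) := by
    intro k
    rw [← integral_const_mul]
    refine integral_mono ((hgw k).const_mul _).norm ((integrable_gaussian_shift x).const_mul _)
      fun t => ?_
    rw [norm_mul, norm_mul, norm_modulated_gaussian_shift, mul_assoc]
    gcongr
    exact hg_bdd k t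
  have hsum : Summable fun k => ∫ t, ‖c k * (g k t * w t)‖ :=
    .of_nonneg_of_le (fun k => integral_nonneg fun t => norm_nonneg _) hnorm_le
      ((hc.mul_right C).mul_right _)
  calc gaborTransform (fun t => ∑' k, c k * g k t) x ω
      = ∫ t, ∑' k, c k * (g k t * w t) := by
        simp only [gaborTransform, w, ← tsum_mul_right, mul_assoc]
    _ = ∑' k, ∫ t, c k * (g k t * w t) :=
        (integral_tsum_of_summable_integral_norm (fun k => (hgw k).const_mul _) hsum).symm
    _ = ∑' k, c k * gaborTransform (g k) x ω := by
        simp only [integral_const_mul, gaborTransform, w, mul_assoc]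

theorem gaborTransform_gaussian_shift (a x ω : ℝ) :
    gaborTransform (fun t => (Real.exp (-π * (t - a) ^ 2) : ℂ)) x ω =
      ((√2)⁻¹ : ℝ) * cexp (-(π / 2) * ((x - a) ^ 2 + ω ^ 2) - π * I * (x + a) * ω) := by
  have hπ : (π : ℂ) ≠ 0 := ofReal_ne_zero.mpr pi_ne_zero
  have hb : (-(2 * π) : ℂ).re < 0 := by simp [pi_pos]
  have hintegrand : ∀ t : ℝ,
      (Real.exp (-π * (t - a) ^ 2) : ℂ) * (Real.exp (-π * (t - x) ^ 2) : ℂ) *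
        cexp (-2 * π * I * t * ω) =
      cexp (-(2 * π) * t ^ 2 + 2 * π * (a + x - ω * I) * t + -(π * (a ^ 2 + x ^ 2))) := by
    intro t
    push_cast
    rw [← Complex.exp_add, ← Complex.exp_add]
    ring_nf
  have hsqrt : ((π : ℂ) / -(-(2 * π))) ^ (1 / 2 : ℂ) = ((√2)⁻¹ : ℝ) := by
    rw [neg_neg, div_mul_cancel_right₀ hπ, ← sqrt_inv, sqrt_eq_rpow, ofReal_cpow (by positivity)]
    norm_num
  simp only [gaborTransform, hintegrand, integral_cexp_quadratic hb, hsqrt]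
  congr 2
  field_simp
  ring_nf
  rw [I_sq]
  ring

theorem gaborTransform_gaussian_shift_mul_conj (a b x ω : ℝ) :
    gaborTransform (fun t => (Real.exp (-π * (t - a) ^ 2) : ℂ)) x ω *
        starRingEnd ℂ (gaborTransform (fun t => (Real.exp (-π * (t - b) ^ 2) : ℂ)) x ω) =
      ((1 / 2 * Real.exp (-(π / 4) * (a - b) ^ 2) : ℝ) : ℂ) * cexp (π * I * (b - a) * ω) *
        (Real.exp (-π * ω ^ 2) : ℂ) * (Real.exp (-π * (x - (a + b) / 2) ^ 2) : ℂ) := by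
  have hhalf : ((√2 : ℂ))⁻¹ * (√2 : ℂ)⁻¹ = 1 / 2 := by
    rw [← mul_inv, ← ofReal_mul, mul_self_sqrt zero_le_two]
    norm_num
  simp only [gaborTransform_gaussian_shift, map_mul, conj_ofReal, ← exp_conj, map_sub, map_neg,
    map_add, map_div₀, conj_I, map_ofNat, map_pow]
  push_cast
  calc _ = ((√2 : ℂ))⁻¹ * (√2 : ℂ)⁻¹ *
        cexp ((-(π / 2) * ((x - a) ^ 2 + ω ^ 2) - π * I * (x + a) * ω) +
          (-(π / 2) * ((x - b) ^ 2 + ω ^ 2) - π * -I * (x + b) * ω)) := by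
        rw [Complex.exp_add]; ring
    _ = 1 / 2 * cexp (-(π / 4) * (a - b) ^ 2 + π * I * (b - a) * ω + -π * ω ^ 2 +
          -π * (x - (a + b) / 2) ^ 2) := by
        rw [hhalf]; congr 2; ring
    _ = _ := by simp only [Complex.exp_add]; ring

end

theorem spectrogram_expansion_general (β : ℝ) (c : ℤ → ℂ)
    (hc : Summable (fun k : ℤ => ‖c k‖)) (f : ℝ → ℂ)
    (hf : ∀ t : ℝ, f t = ∑' k : ℤ, c k * (Real.exp (-Real.pi * (t - β*k)^2) : ℂ))
    (x ω : ℝ) :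
    ((‖gaborTransform f x ω‖^2 : ℝ) : ℂ) =
      ∑' k : ℤ, ∑' j : ℤ,
        c k * starRingEnd ℂ (c j) *
          ((1/2 : ℝ) * Real.exp (-(Real.pi * β^2 / 4) * ((k : ℝ) - j)^2) : ℝ) *
          Complex.exp (Real.pi * Complex.I * β * ((j : ℝ) - k) * ω) *
          (Real.exp (-Real.pi * ω^2) : ℝ) *
          (Real.exp (-Real.pi * (x - β/2 * ((j : ℝ) + k))^2) : ℝ) := by
  obtain rfl : f = fun t => ∑' k : ℤ, c k * (Real.exp (-Real.pi * (t - β * k) ^ 2) : ℂ) :=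
    funext hf
  rw [gaborTransform_tsum c hc _ 1 (fun k => by fun_prop)
    (fun k t => norm_gaussian_shift_le_one _ t) x ω, ofReal_norm_sq_tsum]
  refine tsum_congr fun k => tsum_congr fun j => ?_
  rw [map_mul, mul_mul_mul_comm, gaborTransform_gaussian_shift_mul_conj]
  push_cast
  ring_nf

/-- Expansion of the squared spectrogram of `f = Σ_k c_k φ(·-βk) ∈ V¹_β(φ)`. -/
theorem spectrogram_expansion (β : ℝ) (hβ : 0 < β) (c : ℤ → ℂ)
    (hc : Summable (fun k : ℤ => ‖c k‖)) (f : ℝ → ℂ)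
    (hf : ∀ t : ℝ, f t = ∑' k : ℤ, c k * (Real.exp (-Real.pi * (t - β*k)^2) : ℂ))
    (x ω : ℝ) :
    ((‖gaborTransform f x ω‖^2 : ℝ) : ℂ) =
      ∑' k : ℤ, ∑' j : ℤ,
        c k * starRingEnd ℂ (c j) *
          ((1/2 : ℝ) * Real.exp (-(Real.pi * β^2 / 4) * ((k : ℝ) - j)^2) : ℝ) *
          Complex.exp (Real.pi * Complex.I * β * ((j : ℝ) - k) * ω) *
          (Real.exp (-Real.pi * ω^2) : ℝ) *
          (Real.exp (-Real.pi * (x - β/2 * ((j : ℝ) + k))^2) : ℝ) :=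
  spectrogram_expansion_general β c hc f hf x ω
end
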